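/- In the first-order differential calculus on A_{r,s} determined by ω a = ((1 ⊗ g)Δ(a)) ω with exterior derivative d a = Σ_i (χ_i * a) ω^i, the derivative of the generator f is d f = (r^{-2} − 1) f ω^0, where ω^0 = ω_{11}; in particular, d f involves only the single one-form ω^0 and only the parameter r (not s). -/

import Mathlib

open scoped TensorProduct

noncomputable section

/-- Generators of the cross-product algebra `A_{r,s}`. -/
inductive Gen : Type
  | a | b | c | d | f | fi
deriving DecidableEq

/-- The free algebra on the generators. -/
abbrev FA : Type := FreeAlgebra ℂ Gen

/-- The generators inside the free algebra. -/
def X (g : Gen) : FA := FreeAlgebra.ι ℂ g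

/-- The defining relations of `A_{r,s}`. -/
inductive ArsRel (r s : ℂ) : FA → FA → Prop
  | ab : ArsRel r s (X .a * X .b) (r⁻¹ • (X .b * X .a))
  | bd : ArsRel r s (X .b * X .d) (r⁻¹ • (X .d * X .b))
  | ac : ArsRel r s (X .a * X .c) (r⁻¹ • (X .c * X .a))
  | cd : ArsRel r s (X .c * X .d) (r⁻¹ • (X .d * X .c))
  | bc : ArsRel r s (X .b * X .c) (X .c * X .b)
  | ad : ArsRel r s (X .a * X .d - X .d * X .a) ((r⁻¹ - r) • (X .b * X .c))
  | af : ArsRel r s (X .a * X .f) (X .f * X .a)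
  | cf : ArsRel r s (X .c * X .f) (s • (X .f * X .c))
  | bf : ArsRel r s (X .b * X .f) (s⁻¹ • (X .f * X .b))
  | df : ArsRel r s (X .d * X .f) (X .f * X .d)
  | ffi : ArsRel r s (X .f * X .fi) 1
  | fif : ArsRel r s (X .fi * X .f) 1

/-- The cross-product quantum algebra `A_{r,s}`. -/
abbrev Ars (r s : ℂ) : Type := RingQuot (ArsRel r s)

/-- The generators of `A_{r,s}`. -/
def gen (r s : ℂ) (g : Gen) : Ars r s := RingQuot.mkAlgHom ℂ (ArsRel r s) (X g)

/-- The dual space of linear functionals on `A_{r,s}`. -/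
abbrev Dl (r s : ℂ) := Module.Dual ℂ (Ars r s)

/-- The convolution product on the dual: `⟨uv, x⟩ = ⟨u ⊗ v, Δ(x)⟩`. -/
def conv (r s : ℂ) (Δ : Ars r s →ₐ[ℂ] (Ars r s ⊗[ℂ] Ars r s)) (u v : Dl r s) : Dl r s :=
  (LinearMap.mul' ℂ ℂ).comp ((TensorProduct.map u v).comp Δ.toLinearMap)

/-- The matrix of generators `T` of `A_{r,s}`. -/
def Tel (r s : ℂ) : Matrix (Fin 3) (Fin 3) (Ars r s) :=
  ![![gen r s .f, 0, 0], ![0, gen r s .a, gen r s .b], ![0, gen r s .c, gen r s .d]]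

/-- The statement that `Δ` is the matrix coproduct on the generators. -/
def CoprodOn (r s : ℂ) (Δ : Ars r s →ₐ[ℂ] (Ars r s ⊗[ℂ] Ars r s)) : Prop :=
  Δ (gen r s .a) = gen r s .a ⊗ₜ[ℂ] gen r s .a + gen r s .b ⊗ₜ[ℂ] gen r s .c ∧
  Δ (gen r s .b) = gen r s .a ⊗ₜ[ℂ] gen r s .b + gen r s .b ⊗ₜ[ℂ] gen r s .d ∧
  Δ (gen r s .c) = gen r s .c ⊗ₜ[ℂ] gen r s .a + gen r s .d ⊗ₜ[ℂ] gen r s .c ∧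
  Δ (gen r s .d) = gen r s .c ⊗ₜ[ℂ] gen r s .b + gen r s .d ⊗ₜ[ℂ] gen r s .d ∧
  Δ (gen r s .f) = gen r s .f ⊗ₜ[ℂ] gen r s .f ∧
  Δ (gen r s .fi) = gen r s .fi ⊗ₜ[ℂ] gen r s .fi

/-- The statement that `ε` is the counit on the generators. -/
def CounitOn (r s : ℂ) (ε : Ars r s →ₐ[ℂ] ℂ) : Prop :=
  ε (gen r s .a) = 1 ∧ ε (gen r s .b) = 0 ∧ ε (gen r s .c) = 0 ∧
  ε (gen r s .d) = 1 ∧ ε (gen r s .f) = 1 ∧ ε (gen r s .fi) = 1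

/-- The vector fields `χ_{ij} = Σ_k S(l⁺_{ik}) l⁻_{kj} − δ_{ij} ε` on `A_{r,s}`. -/
def chi (r s : ℂ) (Δ : Ars r s →ₐ[ℂ] (Ars r s ⊗[ℂ] Ars r s))
    (SLp Lm : Fin 3 → Fin 3 → Dl r s) (ε : Ars r s →ₐ[ℂ] ℂ) (i j : Fin 3) : Dl r s :=
  (∑ k : Fin 3, conv r s Δ (SLp i k) (Lm k j)) -
    (if i = j then (1 : ℂ) else 0) • ε.toLinearMap

/-- The convolution action `χ * x = (id ⊗ χ) Δ(x)` of a functional on `A_{r,s}`. -/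
def act (r s : ℂ) (Δ : Ars r s →ₐ[ℂ] (Ars r s ⊗[ℂ] Ars r s)) (u : Dl r s)
    (x : Ars r s) : Ars r s :=
  (TensorProduct.rid ℂ (Ars r s)) ((TensorProduct.map LinearMap.id u) (Δ x))

/-! Since `f` is grouplike, `χ * f = χ(f) f` and convolutions pair multiplicatively with `f`.
As `S(L⁺)` and `L⁻` are diagonal on `f`, this gives `χ_{ij}(f) = δ_{ij} (α_i β_i - 1)` with
`α = (r⁻¹, s, 1)`, `β = (r⁻¹, s⁻¹, 1)`, which vanishes except at `(0,0)`. -/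

section Grouplike

variable {r s : ℂ} {Δ : Ars r s →ₐ[ℂ] (Ars r s ⊗[ℂ] Ars r s)} {x : Ars r s}

theorem act_apply_of_grouplike (hx : Δ x = x ⊗ₜ[ℂ] x) (u : Dl r s) :
    act r s Δ u x = u x • x := by
  simp [act, hx]

theorem conv_apply_of_grouplike (hx : Δ x = x ⊗ₜ[ℂ] x) (u v : Dl r s) :
    conv r s Δ u v x = u x * v x := by
  simp [conv, hx]

theorem chi_apply_of_grouplike (hx : Δ x = x ⊗ₜ[ℂ] x) (SLp Lm : Fin 3 → Fin 3 → Dl r s)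
    (ε : Ars r s →ₐ[ℂ] ℂ) (i j : Fin 3) :
    chi r s Δ SLp Lm ε i j x =
      (∑ k : Fin 3, SLp i k x * Lm k j x) - if i = j then ε x else 0 := by
  simp only [chi, LinearMap.sub_apply, LinearMap.sum_apply, conv_apply_of_grouplike hx]
  split_ifs <;> simp

end Grouplike

theorem sum_diag_mul_diag {R : Type*} [CommSemiring R] {n : ℕ} (α β : Fin n → R) (i j : Fin n) :
    (∑ k, (if i = k then α i else 0) * (if k = j then β k else 0)) =
      if i = j then α i * β i else 0 := by
  simp only [ite_mul, zero_mul]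
  simp only [mul_ite, mul_zero, Finset.sum_ite_eq, Finset.mem_univ, if_true]

theorem stmt11_general (r s : ℂ) (hs : s ≠ 0)
    (Δ : Ars r s →ₐ[ℂ] (Ars r s ⊗[ℂ] Ars r s)) (hΔ : CoprodOn r s Δ)
    (SLp Lm : Fin 3 → Fin 3 → Dl r s) (ε : Ars r s →ₐ[ℂ] ℂ) (hε : CounitOn r s ε)
    (hSf : ∀ i j : Fin 3, SLp i j (gen r s .f) = if i = j then ![r⁻¹, s, 1] i else 0)
    (hLf : ∀ i j : Fin 3, Lm i j (gen r s .f) = if i = j then ![r⁻¹, s⁻¹, 1] i else 0) :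
    ∀ i j : Fin 3,
      act r s Δ (chi r s Δ SLp Lm ε i j) (gen r s .f) =
        if i = 0 ∧ j = 0 then (((r : ℂ) ^ 2)⁻¹ - 1) • gen r s .f else 0 := by
  intro i j
  have hf : Δ (gen r s .f) = gen r s .f ⊗ₜ[ℂ] gen r s .f := hΔ.2.2.2.2.1
  rw [act_apply_of_grouplike hf, chi_apply_of_grouplike hf]
  simp only [hSf, hLf, sum_diag_mul_diag, hε.2.2.2.2.1]
  fin_cases i <;> fin_cases j <;> simp [hs, sq]

/-- In the bicovariant differential calculus on `A_{r,s}` with exterior derivative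
`d x = Σ_{ij} (χ_{ij} * x) ω^{ij}`, the derivative of the generator `f` is
`d f = (r⁻² − 1) f ω⁰` with `ω⁰ = ω_{11}` (index `(0,0)` here): the coefficient of
`ω^{ij}` in `d f` is `(r⁻² − 1) f` for `(i,j) = (0,0)` and `0` otherwise.  In
particular `d f` involves only the single one-form `ω⁰` and only the parameter `r`.
The hypotheses record the pairings of the entries of `S(L⁺)` and `L⁻` with `f`
coming from the `L^±` ansatz. -/
theorem stmt11 (r s : ℂ) (hr : r ≠ 0) (hs : s ≠ 0)
    (Δ : Ars r s →ₐ[ℂ] (Ars r s ⊗[ℂ] Ars r s)) (hΔ : CoprodOn r s Δ)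
    (SLp Lm : Fin 3 → Fin 3 → Dl r s) (ε : Ars r s →ₐ[ℂ] ℂ) (hε : CounitOn r s ε)
    (hSf : ∀ i j : Fin 3, SLp i j (gen r s .f) = if i = j then ![r⁻¹, s, 1] i else 0)
    (hLf : ∀ i j : Fin 3, Lm i j (gen r s .f) = if i = j then ![r⁻¹, s⁻¹, 1] i else 0) :
    ∀ i j : Fin 3,
      act r s Δ (chi r s Δ SLp Lm ε i j) (gen r s .f) =
        if i = 0 ∧ j = 0 then (((r : ℂ) ^ 2)⁻¹ - 1) • gen r s .f else 0 :=
  stmt11_general r s hs Δ hΔ SLp Lm ε hε hSf hLf
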